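/- arXiv:1910.07910 — 11 statements merged into one kernel-verified Lean document; each statement's English description precedes it below -/
import Mathlib

section
/- Let (P, ≤) be a partially ordered set in which every chain (a subset totally ordered by ≤, including the empty chain) has a least upper bound and a greatest lower bound in P. Then every monotone function f : P → P has a least fixed point and a greatest fixed point. -/
theorem aux_lfp {P : Type*} [PartialOrder P]
    (hchain : ∀ C : Set P, IsChain (· ≤ ·) C → ∃ s, IsLUB C s)
    (f : P → P) (hf : Monotone f) :
    ∃ a, f a = a ∧ ∀ b, f b = b → a ≤ b := by
  classical
  set Q : Set P := {x | x ≤ f x ∧ ∀ b, f b = b → x ≤ b} with hQ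
  obtain ⟨m, hm⟩ := zorn_le₀ Q (by
    intro c hcQ hc
    obtain ⟨s, hs⟩ := hchain c hc
    refine ⟨s, ⟨?_, ?_⟩, fun z hz => hs.1 hz⟩
    · apply hs.2
      intro x hx
      exact le_trans (hcQ hx).1 (hf (hs.1 hx))
    · intro b hb
      apply hs.2
      intro x hx
      exact (hcQ hx).2 b hb)
  have hmQ := hm.1
  have hfm : f m ∈ Q := by
    refine ⟨hf hmQ.1, fun b hb => ?_⟩
    calc f m ≤ f b := hf (hmQ.2 b hb)
    _ = b := hb
  have : m = f m := le_antisymm hmQ.1 (hm.2 hfm hmQ.1)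
  exact ⟨m, this.symm, hmQ.2⟩

/-- In a poset in which every chain (including the empty chain) has a least
upper bound and a greatest lower bound, every monotone function has a least
fixed point and a greatest fixed point. -/
theorem stmt_0 {P : Type*} [PartialOrder P]
    (hchain : ∀ C : Set P, IsChain (· ≤ ·) C →
      (∃ s, IsLUB C s) ∧ (∃ i, IsGLB C i))
    (f : P → P) (hf : Monotone f) :
    (∃ a, f a = a ∧ ∀ b, f b = b → a ≤ b) ∧
    (∃ a, f a = a ∧ ∀ b, f b = b → b ≤ a) := by
  constructor
  · exact aux_lfp (fun C hC => (hchain C hC).1) f hf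
  · have hglb : ∀ C : Set Pᵒᵈ, IsChain (· ≤ ·) C → ∃ s, IsLUB C s := by
      intro C hC
      obtain ⟨i, hi⟩ := (hchain (OrderDual.ofDual '' C) (by
        rintro _ ⟨p, hp, rfl⟩ _ ⟨q, hq, rfl⟩ hpq
        exact hC hq hp (fun h => hpq (congrArg OrderDual.ofDual h.symm)))).2
      exact ⟨OrderDual.toDual i, fun x hx => hi.1 (Set.mem_image_of_mem _ hx),
        fun x hx => hi.2 fun y ⟨z, hz, hzy⟩ => hzy ▸ hx hz⟩
    obtain ⟨a, ha, hb⟩ := aux_lfp (P := Pᵒᵈ) hglb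
      (fun x => OrderDual.toDual (f (OrderDual.ofDual x)))
      (fun a b hab => hf hab)
    exact ⟨OrderDual.ofDual a, congrArg OrderDual.ofDual ha,
      fun b hb' => hb (OrderDual.toDual b) (congrArg OrderDual.toDual hb')⟩
end

section
/- Let K be a naturally ordered commutative semiring with idempotent addition (a + a = a for all a ∈ K) that is fully chain-complete. Then every subset S ⊆ K has a least upper bound and a greatest lower bound with respect to the natural order; that is, the natural order on K forms a complete lattice. -/
/-- A naturally ordered commutative semiring with idempotent addition that is
fully chain-complete is a complete lattice: every subset has a least upper
bound and a greatest lower bound with respect to the natural order. -/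
theorem stmt_1 {K : Type*} [CommSemiring K] [PartialOrder K]
    (h01 : (0 : K) ≠ 1)
    (hord : ∀ a b : K, a ≤ b ↔ ∃ c : K, a + c = b)
    (hidem : ∀ a : K, a + a = a)
    (hcc : ∀ C : Set K, IsChain (· ≤ ·) C →
      (∃ s, IsLUB C s) ∧ (∃ i, IsGLB C i)) :
    ∀ S : Set K, (∃ s, IsLUB S s) ∧ (∃ i, IsGLB S i) := by
  have hzero : ∀ a : K, (0 : K) ≤ a := fun a => (hord 0 a).mpr ⟨a, zero_add a⟩
  have hleadd : ∀ a b : K, a ≤ a + b := fun a b => (hord a (a + b)).mpr ⟨b, rfl⟩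
  have haddle : ∀ a b u : K, a ≤ u → b ≤ u → a + b ≤ u := by
    intro a b u hau hbu
    obtain ⟨c, hc⟩ := (hord a u).mp hau
    obtain ⟨d, hd⟩ := (hord b u).mp hbu
    refine (hord _ _).mpr ⟨c + d, ?_⟩
    calc a + b + (c + d) = (a + c) + (b + d) := by ring
      _ = u := by rw [hc, hd, hidem]
  -- Every set has a least upper bound.
  have hlub : ∀ S : Set K, ∃ s, IsLUB S s := by
    intro S
    -- A = lower bounds of the upper bounds of S
    set A : Set K := lowerBounds (upperBounds S) with hA
    have hchain : ∀ c ⊆ A, IsChain (· ≤ ·) c → ∃ ub ∈ A, ∀ z ∈ c, z ≤ ub := by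
      intro c hcA hc
      rcases c.eq_empty_or_nonempty with rfl | hne
      · exact ⟨0, fun u _ => hzero u, by simp⟩
      · obtain ⟨⟨t, ht⟩, -⟩ := hcc c hc
        refine ⟨t, ?_, fun z hz => ht.1 hz⟩
        intro u hu
        exact ht.2 fun x hx => hcA hx hu
    obtain ⟨m, hm⟩ := zorn_le₀ A hchain
    refine ⟨m, ?_, fun u hu => hm.1 hu⟩
    -- m is an upper bound of S: every s ∈ S is in A, and m is max of A
    intro s hs
    have hsA : s ∈ A := fun u hu => hu hs
    have hmsA : m + s ∈ A := fun u hu => haddle _ _ _ (hm.1 hu) (hsA hu)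
    have : m + s ≤ m := hm.2 hmsA (hleadd m s)
    calc s ≤ m + s := by rw [add_comm]; exact hleadd s m
      _ ≤ m := this
  intro S
  refine ⟨hlub S, ?_⟩
  obtain ⟨t, ht⟩ := hlub (lowerBounds S)
  refine ⟨t, fun s hs => ht.2 fun x hx => hx hs, fun x hx => ht.1 hx⟩
end

section
/- Let P be a partially ordered set in which every chain (a subset totally ordered by ≤, including the empty chain) has a least upper bound, and in which every finite subset has a least upper bound. Then every subset of P has a least upper bound. -/
/-- (Markowsky) If in a poset every chain (including the empty chain) has a
least upper bound and every finite subset has a least upper bound, then every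
subset has a least upper bound. -/
theorem stmt_3 {P : Type*} [PartialOrder P]
    (hchain : ∀ C : Set P, IsChain (· ≤ ·) C → ∃ s, IsLUB C s)
    (hfin : ∀ S : Set P, S.Finite → ∃ s, IsLUB S s) :
    ∀ S : Set P, ∃ s, IsLUB S s := by
  intro S
  -- Z = lower bounds of the upper bounds of S
  set Z : Set P := lowerBounds (upperBounds S) with hZ
  have hSZ : S ⊆ Z := fun s hs u hu => hu hs
  -- Zorn: Z has a maximal element
  obtain ⟨m, hmZ, hmax⟩ := zorn_le₀ Z (fun c hcZ hc => by
    obtain ⟨b, hb⟩ := hchain c hc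
    refine ⟨b, ?_, fun z hz => hb.1 hz⟩
    intro u hu
    exact hb.2 fun z hz => hcZ hz hu)
  refine ⟨m, fun s hs => ?_, fun u hu => hmZ hu⟩
  -- m is an upper bound of S: for s ∈ S, s ∨ m ∈ Z, so by maximality s ∨ m ≤ m
  obtain ⟨j, hj⟩ := hfin {s, m} ((Set.finite_singleton m).insert s)
  have hjZ : j ∈ Z := by
    intro u hu
    exact hj.2 (by
      rintro x (rfl | rfl)
      · exact hu hs
      · exact hmZ hu)
  have hmj : m ≤ j := hj.1 (by simp)
  have := hmax hjZ hmj
  exact le_trans (hj.1 (by simp)) this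
end

section
/- (Splitting Lemma, infima) Let K be a naturally ordered, fully chain-complete commutative semiring in which addition and multiplication preserve infima of nonempty chains in each argument, i.e., a ∘ inf C = inf{a ∘ c : c ∈ C} for all a ∈ K, all nonempty chains C ⊆ K, and ∘ ∈ {+,·}. Then for any two antitone sequences a, b : ℕ → K (aₙ₊₁ ≤ aₙ and bₙ₊₁ ≤ bₙ for all n), one has inf_{n}(aₙ + bₙ) = (inf_{n} aₙ) + (inf_{n} bₙ) and inf_{n}(aₙ · bₙ) = (inf_{n} aₙ) · (inf_{n} bₙ). -/
/-- Auxiliary splitting lemma for a generic commutative, monotone,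
infimum-preserving binary operation. -/
lemma stmt_5_aux {K : Type*} [PartialOrder K] (op : K → K → K)
    (hcomm : ∀ x y, op x y = op y x)
    (hmono : ∀ x y z : K, x ≤ y → op z x ≤ op z y)
    (hinf : ∀ (a : K) (C : Set K), IsChain (· ≤ ·) C → C.Nonempty →
      ∀ i, IsGLB C i → IsGLB ((fun c => op a c) '' C) (op a i))
    (a b : ℕ → K) (ha : Antitone a) (hb : Antitone b)
    (ia ib i : K) (hia : IsGLB (Set.range a) ia) (hib : IsGLB (Set.range b) ib)
    (hi : IsGLB (Set.range fun n => op (a n) (b n)) i) : i = op ia ib := by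
  have chainA : IsChain (· ≤ ·) (Set.range a) := by
    rintro _ ⟨n, rfl⟩ _ ⟨m, rfl⟩ _
    rcases le_total n m with h | h
    · exact Or.inr (ha h)
    · exact Or.inl (ha h)
  have chainB : IsChain (· ≤ ·) (Set.range b) := by
    rintro _ ⟨n, rfl⟩ _ ⟨m, rfl⟩ _
    rcases le_total n m with h | h
    · exact Or.inr (hb h)
    · exact Or.inl (hb h)
  refine hi.unique ⟨?_, ?_⟩
  · rintro x ⟨n, rfl⟩
    calc op ia ib ≤ op ia (b n) := hmono _ _ _ (hib.1 ⟨n, rfl⟩)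
      _ ≤ op (a n) (b n) := by
          rw [hcomm ia, hcomm (a n)]
          exact hmono _ _ _ (hia.1 ⟨n, rfl⟩)
  · intro x hx
    have hxnm : ∀ n m, x ≤ op (a n) (b m) := by
      intro n m
      have h1 : op (a (max n m)) (b (max n m)) ≤ op (a n) (b m) := by
        refine le_trans (hmono _ _ _ (hb (le_max_right n m))) ?_
        rw [hcomm, hcomm (a n)]
        exact hmono _ _ _ (ha (le_max_left n m))
      exact le_trans (hx ⟨max n m, rfl⟩) h1
    have step1 : ∀ n, x ≤ op (a n) ib := by
      intro n
      have h := hinf (a n) (Set.range b) chainB ⟨b 0, 0, rfl⟩ ib hib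
      exact h.2 (by rintro y ⟨_, ⟨m, rfl⟩, rfl⟩; exact hxnm n m)
    have h := hinf ib (Set.range a) chainA ⟨a 0, 0, rfl⟩ ia hia
    have hx2 : x ≤ op ib ia :=
      h.2 (by rintro y ⟨_, ⟨n, rfl⟩, rfl⟩; exact (hcomm (a n) ib ▸ step1 n : x ≤ op ib (a n)))
    rw [hcomm]; exact hx2

/-- (Splitting Lemma, infima) In a naturally ordered, fully chain-complete
commutative semiring whose operations preserve infima of nonempty chains,
infima of antitone sequences split over addition and multiplication. -/
theorem stmt_5 {K : Type*} [CommSemiring K] [PartialOrder K]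
    (h01 : (0 : K) ≠ 1)
    (hord : ∀ a b : K, a ≤ b ↔ ∃ c : K, a + c = b)
    (hcc : ∀ C : Set K, IsChain (· ≤ ·) C →
      (∃ s, IsLUB C s) ∧ (∃ i, IsGLB C i))
    (haddinf : ∀ (a : K) (C : Set K), IsChain (· ≤ ·) C → C.Nonempty →
      ∀ i, IsGLB C i → IsGLB ((fun c => a + c) '' C) (a + i))
    (hmulinf : ∀ (a : K) (C : Set K), IsChain (· ≤ ·) C → C.Nonempty →
      ∀ i, IsGLB C i → IsGLB ((fun c => a * c) '' C) (a * i)) :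
    ∀ (a b : ℕ → K), Antitone a → Antitone b →
      ∀ ia ib iadd imul : K,
        IsGLB (Set.range a) ia → IsGLB (Set.range b) ib →
        IsGLB (Set.range fun n => a n + b n) iadd →
        IsGLB (Set.range fun n => a n * b n) imul →
        iadd = ia + ib ∧ imul = ia * ib := by
  intro a b ha hb ia ib iadd imul hia hib hiadd himul
  have addm : ∀ x y z : K, x ≤ y → z + x ≤ z + y := by
    intro x y z h
    obtain ⟨c, hc⟩ := (hord x y).1 h
    exact (hord _ _).2 ⟨c, by rw [add_assoc, hc]⟩
  have mulm : ∀ x y z : K, x ≤ y → z * x ≤ z * y := by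
    intro x y z h
    obtain ⟨c, hc⟩ := (hord x y).1 h
    exact (hord _ _).2 ⟨z * c, by rw [← mul_add, hc]⟩
  exact ⟨stmt_5_aux (· + ·) add_comm addm haddinf a b ha hb ia ib iadd hia hib hiadd,
    stmt_5_aux (· * ·) mul_comm mulm hmulinf a b ha hb ia ib imul hia hib himul⟩
end

section
/- Let K be a naturally ordered, absorptive, fully continuous commutative semiring. Then for all a, b ∈ K one has (a + b)^∞ = a^∞ + b^∞, where c^∞ denotes the infinitary power inf{cⁿ : n ≥ 1}. -/
/-- In a naturally ordered, absorptive, fully continuous commutative semiring,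
`(a + b)^∞ = a^∞ + b^∞`, where `c^∞` is the infimum of `{cⁿ : n ≥ 1}`. -/
theorem stmt_7 {K : Type*} [CommSemiring K] [PartialOrder K]
    (h01 : (0 : K) ≠ 1)
    (hord : ∀ a b : K, a ≤ b ↔ ∃ c : K, a + c = b)
    (habs : ∀ a b : K, a + a * b = a)
    (hcc : ∀ C : Set K, IsChain (· ≤ ·) C →
      (∃ s, IsLUB C s) ∧ (∃ i, IsGLB C i))
    (haddsup : ∀ (a : K) (C : Set K), IsChain (· ≤ ·) C → C.Nonempty →
      ∀ s, IsLUB C s → IsLUB ((fun c => a + c) '' C) (a + s))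
    (haddinf : ∀ (a : K) (C : Set K), IsChain (· ≤ ·) C → C.Nonempty →
      ∀ i, IsGLB C i → IsGLB ((fun c => a + c) '' C) (a + i))
    (hmulsup : ∀ (a : K) (C : Set K), IsChain (· ≤ ·) C → C.Nonempty →
      ∀ s, IsLUB C s → IsLUB ((fun c => a * c) '' C) (a * s))
    (hmulinf : ∀ (a : K) (C : Set K), IsChain (· ≤ ·) C → C.Nonempty →
      ∀ i, IsGLB C i → IsGLB ((fun c => a * c) '' C) (a * i))
    (a b pa pb pab : K)
    (hpa : IsGLB {y : K | ∃ n : ℕ, 1 ≤ n ∧ y = a ^ n} pa)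
    (hpb : IsGLB {y : K | ∃ n : ℕ, 1 ≤ n ∧ y = b ^ n} pb)
    (hpab : IsGLB {y : K | ∃ n : ℕ, 1 ≤ n ∧ y = (a + b) ^ n} pab) :
    pab = pa + pb := by
  -- basic order facts
  have hidem : ∀ x : K, x + x = x := fun x => by simpa using habs x 1
  have hle_add : ∀ x c : K, x ≤ x + c := fun x c => (hord _ _).mpr ⟨c, rfl⟩
  have hmul_le_left : ∀ x y : K, x * y ≤ x := fun x y =>
    (hord _ _).mpr ⟨x, by rw [add_comm]; exact habs x y⟩
  have hmul_le_right : ∀ x y : K, x * y ≤ y := fun x y => by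
    rw [mul_comm]; exact hmul_le_left y x
  have hle_one : ∀ x : K, x ≤ 1 := fun x =>
    (hord _ _).mpr ⟨1, by rw [add_comm]; simpa using habs 1 x⟩
  have hadd_le : ∀ x y z : K, x ≤ z → y ≤ z → x + y ≤ z := by
    intro x y z hx hy
    obtain ⟨c, hc⟩ := (hord x z).mp hx
    obtain ⟨d, hd⟩ := (hord y z).mp hy
    exact (hord _ _).mpr ⟨c + d, by
      rw [show x + y + (c + d) = (x + c) + (y + d) by ring, hc, hd, hidem]⟩
  have hadd_mono : ∀ c x y : K, x ≤ y → c + x ≤ c + y := by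
    intro c x y h; obtain ⟨d, hd⟩ := (hord x y).mp h
    exact (hord _ _).mpr ⟨d, by rw [add_assoc, hd]⟩
  have hadd_mono2 : ∀ x y z w : K, x ≤ z → y ≤ w → x + y ≤ z + w := by
    intro x y z w h1 h2
    calc x + y ≤ x + w := hadd_mono x y w h2
    _ = w + x := add_comm _ _
    _ ≤ w + z := hadd_mono w x z h1
    _ = z + w := add_comm _ _
  have hmul_mono : ∀ c x y : K, x ≤ y → c * x ≤ c * y := by
    intro c x y h; obtain ⟨d, hd⟩ := (hord x y).mp h
    exact (hord _ _).mpr ⟨c * d, by rw [← mul_add, hd]⟩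
  have hpow_mono : ∀ (n : ℕ) (x y : K), x ≤ y → x ^ n ≤ y ^ n := by
    intro n x y h
    induction n with
    | zero => simp
    | succ n ih =>
      rw [pow_succ, pow_succ]
      calc x ^ n * x ≤ x ^ n * y := hmul_mono _ _ _ h
      _ = y * x ^ n := mul_comm _ _
      _ ≤ y * y ^ n := hmul_mono _ _ _ ih
      _ = y ^ n * y := mul_comm _ _
  have hpow_anti : ∀ (m n : ℕ) (x : K), m ≤ n → x ^ n ≤ x ^ m := by
    intro m n x h
    obtain ⟨k, rfl⟩ := Nat.exists_eq_add_of_le h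
    rw [pow_add]; exact hmul_le_left _ _
  -- power sets are chains
  have hchain : ∀ x : K, IsChain (· ≤ ·) {y : K | ∃ n : ℕ, 1 ≤ n ∧ y = x ^ n} := by
    intro x u hu v hv _
    obtain ⟨n, _, rfl⟩ := hu; obtain ⟨m, _, rfl⟩ := hv
    rcases le_total n m with h | h
    · exact Or.inr (hpow_anti n m x h)
    · exact Or.inl (hpow_anti m n x h)
  have hne : ∀ x : K, ({y : K | ∃ n : ℕ, 1 ≤ n ∧ y = x ^ n}).Nonempty :=
    fun x => ⟨x, 1, le_refl 1, (pow_one x).symm⟩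
  -- key inequality : (a+b)^(i+j) ≤ a^i + b^j
  have key : ∀ m i j : ℕ, i + j = m → (a + b) ^ m ≤ a ^ i + b ^ j := by
    intro m
    induction m with
    | zero =>
      intro i j hij
      obtain ⟨hi, hj⟩ := Nat.add_eq_zero.mp hij
      subst hi; subst hj
      simpa using hle_add (1 : K) 1
    | succ m ih =>
      intro i j hij
      match i, j with
      | 0, j =>
        calc (a + b) ^ (m + 1) ≤ 1 := hle_one _
        _ ≤ 1 + b ^ j := hle_add 1 _
        _ = a ^ 0 + b ^ j := by rw [pow_zero]
      | i, 0 =>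
        calc (a + b) ^ (m + 1) ≤ 1 := hle_one _
        _ ≤ 1 + a ^ i := hle_add 1 _
        _ = a ^ i + 1 := add_comm _ _
        _ = a ^ i + b ^ 0 := by rw [pow_zero]
      | i + 1, j + 1 =>
        have h1 : i + (j + 1) = m := by omega
        have h2 : (i + 1) + j = m := by omega
        have ha : a * (a + b) ^ m ≤ a ^ (i + 1) + b ^ (j + 1) := by
          calc a * (a + b) ^ m ≤ a * (a ^ i + b ^ (j + 1)) := hmul_mono _ _ _ (ih i (j + 1) h1)
          _ = a ^ (i + 1) + a * b ^ (j + 1) := by ring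
          _ ≤ a ^ (i + 1) + b ^ (j + 1) := hadd_mono _ _ _ (hmul_le_right _ _)
        have hb : b * (a + b) ^ m ≤ a ^ (i + 1) + b ^ (j + 1) := by
          calc b * (a + b) ^ m ≤ b * (a ^ (i + 1) + b ^ j) := hmul_mono _ _ _ (ih (i + 1) j h2)
          _ = b * a ^ (i + 1) + b ^ (j + 1) := by ring
          _ ≤ a ^ (i + 1) + b ^ (j + 1) := by
              apply hadd_mono2
              · exact hmul_le_right _ _
              · exact le_refl _
        calc (a + b) ^ (m + 1) = a * (a + b) ^ m + b * (a + b) ^ m := by ring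
        _ ≤ a ^ (i + 1) + b ^ (j + 1) := hadd_le _ _ _ ha hb
  apply le_antisymm
  · -- pab ≤ pa + pb
    -- first : pab ≤ a^n + b^m for all n,m ≥ 1
    have hstep : ∀ n m : ℕ, 1 ≤ n → 1 ≤ m → pab ≤ a ^ n + b ^ m := by
      intro n m hn hm
      have h1 : pab ≤ (a + b) ^ (n + m) := hpab.1 ⟨n + m, by omega, rfl⟩
      exact h1.trans (key (n + m) n m rfl)
    -- for each n : pab ≤ a^n + pb
    have hstep2 : ∀ n : ℕ, 1 ≤ n → pab ≤ a ^ n + pb := by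
      intro n hn
      have hglb := haddinf (a ^ n) _ (hchain b) (hne b) pb hpb
      apply hglb.2
      rintro y ⟨z, ⟨m, hm, rfl⟩, rfl⟩
      exact hstep n m hn hm
    have hglb := haddinf pb _ (hchain a) (hne a) pa hpa
    have : pab ≤ pb + pa := by
      apply hglb.2
      rintro y ⟨z, ⟨n, hn, rfl⟩, rfl⟩
      calc pab ≤ a ^ n + pb := hstep2 n hn
      _ = pb + a ^ n := add_comm _ _
    calc pab ≤ pb + pa := this
    _ = pa + pb := add_comm _ _
  · -- pa + pb ≤ pab
    apply hpab.2
    rintro y ⟨n, hn, rfl⟩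
    have ha : pa ≤ (a + b) ^ n :=
      (hpa.1 ⟨n, hn, rfl⟩).trans (hpow_mono n a (a + b) (hle_add a b))
    have hb : pb ≤ (a + b) ^ n := by
      refine (hpb.1 ⟨n, hn, rfl⟩).trans (hpow_mono n b (a + b) ?_)
      rw [add_comm]; exact hle_add b a
    exact hadd_le _ _ _ ha hb
end

section
/- Let K be a naturally ordered, absorptive, fully continuous commutative semiring and let a : ℕ → K be an antitone sequence (aₙ₊₁ ≤ aₙ for all n). Then (inf_{n} aₙ)^∞ = inf_{n} (aₙ)^∞, where c^∞ denotes the infinitary power inf{cᵏ : k ≥ 1}. -/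
/-- In a naturally ordered, absorptive, fully continuous commutative semiring,
for an antitone sequence `a`, `(inf_n aₙ)^∞ = inf_n (aₙ)^∞`. -/
theorem stmt_9 {K : Type*} [CommSemiring K] [PartialOrder K]
    (h01 : (0 : K) ≠ 1)
    (hord : ∀ a b : K, a ≤ b ↔ ∃ c : K, a + c = b)
    (habs : ∀ a b : K, a + a * b = a)
    (hcc : ∀ C : Set K, IsChain (· ≤ ·) C →
      (∃ s, IsLUB C s) ∧ (∃ i, IsGLB C i))
    (haddsup : ∀ (a : K) (C : Set K), IsChain (· ≤ ·) C → C.Nonempty →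
      ∀ s, IsLUB C s → IsLUB ((fun c => a + c) '' C) (a + s))
    (haddinf : ∀ (a : K) (C : Set K), IsChain (· ≤ ·) C → C.Nonempty →
      ∀ i, IsGLB C i → IsGLB ((fun c => a + c) '' C) (a + i))
    (hmulsup : ∀ (a : K) (C : Set K), IsChain (· ≤ ·) C → C.Nonempty →
      ∀ s, IsLUB C s → IsLUB ((fun c => a * c) '' C) (a * s))
    (hmulinf : ∀ (a : K) (C : Set K), IsChain (· ≤ ·) C → C.Nonempty →
      ∀ i, IsGLB C i → IsGLB ((fun c => a * c) '' C) (a * i))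
    (a : ℕ → K) (hanti : Antitone a)
    (i : K) (hi : IsGLB (Set.range a) i)
    (pii : K) (hpii : IsGLB {y : K | ∃ k : ℕ, 1 ≤ k ∧ y = i ^ k} pii)
    (p : ℕ → K) (hp : ∀ n, IsGLB {y : K | ∃ k : ℕ, 1 ≤ k ∧ y = (a n) ^ k} (p n))
    (q : K) (hq : IsGLB (Set.range p) q) :
    pii = q := by
  have hmul_mono : ∀ c x y : K, x ≤ y → c * x ≤ c * y := by
    intro c x y hxy
    obtain ⟨d, hd⟩ := (hord x y).1 hxy
    exact (hord _ _).2 ⟨c * d, by rw [← mul_add, hd]⟩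
  have hpow_mono : ∀ (k : ℕ) (x y : K), x ≤ y → x ^ k ≤ y ^ k := by
    intro k
    induction k with
    | zero => intro x y _; simp
    | succ k ih =>
      intro x y hxy
      rw [pow_succ, pow_succ]
      calc x ^ k * x ≤ x ^ k * y := hmul_mono _ _ _ hxy
        _ = y * x ^ k := mul_comm _ _
        _ ≤ y * y ^ k := hmul_mono _ _ _ (ih x y hxy)
        _ = y ^ k * y := mul_comm _ _
  have hchain : IsChain (· ≤ ·) (Set.range a) := by
    rintro _ ⟨m, rfl⟩ _ ⟨n, rfl⟩ _
    rcases le_total m n with h | h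
    · exact Or.inr (hanti h)
    · exact Or.inl (hanti h)
  have hchaink : ∀ k, IsChain (· ≤ ·) (Set.range (fun n => a n ^ k)) := by
    intro k
    rintro _ ⟨m, rfl⟩ _ ⟨n, rfl⟩ _
    rcases le_total m n with h | h
    · exact Or.inr (hpow_mono k _ _ (hanti h))
    · exact Or.inl (hpow_mono k _ _ (hanti h))
  have hne : (Set.range a).Nonempty := ⟨a 0, 0, rfl⟩
  have hnek : ∀ k, (Set.range (fun n => a n ^ k)).Nonempty := fun k => ⟨a 0 ^ k, 0, rfl⟩
  have key : ∀ k : ℕ, 1 ≤ k → IsGLB (Set.range (fun n => a n ^ k)) (i ^ k) := by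
    intro k hk
    induction k with
    | zero => omega
    | succ k ih =>
      rcases Nat.eq_or_lt_of_le hk with h1 | h1
      · have : k = 0 := by omega
        subst this
        simpa using hi
      · have hk1 : 1 ≤ k := by omega
        have ihk := ih hk1
        constructor
        · rintro _ ⟨n, rfl⟩
          have e1 : i ^ k ≤ a n ^ k := ihk.1 ⟨n, rfl⟩
          have e2 : i ≤ a n := hi.1 ⟨n, rfl⟩
          calc i ^ (k+1) = i ^ k * i := pow_succ i k
            _ ≤ i ^ k * a n := hmul_mono _ _ _ e2
            _ = a n * i ^ k := mul_comm _ _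
            _ ≤ a n * a n ^ k := hmul_mono _ _ _ e1
            _ = a n ^ (k+1) := by ring
        · intro b hb
          have step1 : ∀ n, b ≤ i * a n ^ k := by
            intro n
            have hglb : IsGLB ((fun c => a n ^ k * c) '' Set.range a) (a n ^ k * i) :=
              hmulinf _ _ hchain hne i hi
            have hb2 : b ≤ a n ^ k * i := by
              apply hglb.2
              rintro _ ⟨_, ⟨m, rfl⟩, rfl⟩
              have hM : b ≤ a (max n m) ^ (k+1) := hb ⟨max n m, rfl⟩
              have hstep : a (max n m) ^ (k+1) ≤ a n ^ k * a m := by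
                have e1 : a (max n m) ^ k ≤ a n ^ k := hpow_mono k _ _ (hanti (le_max_left n m))
                have e2 : a (max n m) ≤ a m := hanti (le_max_right n m)
                calc a (max n m) ^ (k+1) = a (max n m) ^ k * a (max n m) := pow_succ _ _
                  _ ≤ a (max n m) ^ k * a m := hmul_mono _ _ _ e2
                  _ = a m * a (max n m) ^ k := mul_comm _ _
                  _ ≤ a m * a n ^ k := hmul_mono _ _ _ e1
                  _ = a n ^ k * a m := mul_comm _ _
              exact hM.trans hstep
            rwa [mul_comm] at hb2
          have hglb2 : IsGLB ((fun c => i * c) '' Set.range (fun n => a n ^ k)) (i * i ^ k) :=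
            hmulinf _ _ (hchaink k) (hnek k) _ ihk
          have hbfin : b ≤ i * i ^ k := by
            apply hglb2.2
            rintro _ ⟨_, ⟨n, rfl⟩, rfl⟩
            exact step1 n
          calc b ≤ i * i ^ k := hbfin
            _ = i ^ (k+1) := by ring
  have h1 : pii ≤ q := by
    apply hq.2
    rintro _ ⟨n, rfl⟩
    apply (hp n).2
    rintro _ ⟨k, hk, rfl⟩
    calc pii ≤ i ^ k := hpii.1 ⟨k, hk, rfl⟩
      _ ≤ a n ^ k := hpow_mono k _ _ (hi.1 ⟨n, rfl⟩)
  have h2 : q ≤ pii := by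
    apply hpii.2
    rintro _ ⟨k, hk, rfl⟩
    apply (key k hk).2
    rintro _ ⟨n, rfl⟩
    exact (hq.1 ⟨n, rfl⟩).trans ((hp n).1 ⟨k, hk, rfl⟩)
  exact le_antisymm h1 h2
end

section
/- For x ∈ [0,1] ⊆ ℝ define g_x : [0,1] → [0,1] by g_x(y) = max(0, x + y − 1). Then for all x, y ∈ [0,1]: g_x(y) = y if and only if x = 1 or y = 0. Consequently, the greatest fixed point G(x) := sup{y ∈ [0,1] : g_x(y) = y} satisfies G(1) = 1 and G(x) = 0 for every x < 1; in particular, for the ascending sequence xₙ = 1 − 1/(1+n) one has sup_{n} xₙ = 1 and sup_{n} G(xₙ) = 0 ≠ 1 = G(sup_{n} xₙ), so G does not preserve suprema of ascending ω-chains. -/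
/-- The greatest fixed point of `y ↦ max 0 (x + y - 1)` on `[0,1]`. -/
noncomputable def lukGfp (x : ℝ) : ℝ :=
  sSup {y | y ∈ Set.Icc (0 : ℝ) 1 ∧ max 0 (x + y - 1) = y}

lemma luk_iff {x y : ℝ} (hx : x ∈ Set.Icc (0:ℝ) 1) (hy : y ∈ Set.Icc (0:ℝ) 1) :
    max 0 (x + y - 1) = y ↔ x = 1 ∨ y = 0 := by
  obtain ⟨hx0, hx1⟩ := hx
  obtain ⟨hy0, hy1⟩ := hy
  constructor
  · intro h
    rcases le_or_gt (x + y - 1) 0 with hc | hc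
    · right; rw [max_eq_left hc] at h; linarith
    · left; rw [max_eq_right hc.le] at h; linarith
  · rintro (rfl | rfl)
    · rw [show (1:ℝ) + y - 1 = y by ring, max_eq_right hy0]
    · rw [max_eq_left (by linarith)]

lemma lukGfp_one : lukGfp 1 = 1 := by
  have : {y | y ∈ Set.Icc (0:ℝ) 1 ∧ max 0 (1 + y - 1) = y} = Set.Icc (0:ℝ) 1 := by
    ext y
    simp only [Set.mem_setOf_eq, Set.mem_Icc, and_iff_left_iff_imp]
    rintro ⟨h0, _⟩
    rw [show (1:ℝ) + y - 1 = y by ring, max_eq_right h0]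
  rw [lukGfp, this, csSup_Icc zero_le_one]

lemma lukGfp_lt_one {x : ℝ} (hx : x ∈ Set.Icc (0:ℝ) 1) (h1 : x < 1) : lukGfp x = 0 := by
  have : {y | y ∈ Set.Icc (0:ℝ) 1 ∧ max 0 (x + y - 1) = y} = {0} := by
    ext y
    simp only [Set.mem_setOf_eq, Set.mem_singleton_iff]
    constructor
    · rintro ⟨hy, hfix⟩
      rcases (luk_iff hx hy).mp hfix with rfl | rfl
      · exact absurd h1 (lt_irrefl _)
      · rfl
    · rintro rfl
      exact ⟨⟨le_refl _, zero_le_one⟩, (luk_iff hx ⟨le_refl _, zero_le_one⟩).mpr (Or.inr rfl)⟩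
  rw [lukGfp, this, csSup_singleton]

lemma chain_mem (n : ℕ) : (1 - 1 / (1 + (n:ℝ))) ∈ Set.Icc (0:ℝ) 1 := by
  have h1 : (0:ℝ) < 1 + n := by positivity
  constructor
  · have : 1 / (1 + (n:ℝ)) ≤ 1 := by
      rw [div_le_one h1]; linarith [Nat.cast_nonneg (α := ℝ) n]
    linarith
  · have : 0 ≤ 1 / (1 + (n:ℝ)) := by positivity
    linarith

lemma chain_lt (n : ℕ) : (1 - 1 / (1 + (n:ℝ))) < 1 := by
  have h1 : (0:ℝ) < 1 + n := by positivity
  have : 0 < 1 / (1 + (n:ℝ)) := by positivity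
  linarith

lemma chain_sup : (⨆ n : ℕ, (1 - 1 / (1 + (n : ℝ)))) = 1 := by
  have hbdd : BddAbove (Set.range fun n : ℕ => (1 - 1 / (1 + (n:ℝ)))) :=
    ⟨1, by rintro _ ⟨n, rfl⟩; exact (chain_lt n).le⟩
  apply le_antisymm
  · exact ciSup_le fun n => (chain_lt n).le
  · by_contra h
    push_neg at h
    obtain ⟨n, hn⟩ := exists_nat_one_div_lt (show (0:ℝ) < 1 - (⨆ n : ℕ, (1 - 1 / (1 + (n:ℝ)))) by linarith)
    have := le_ciSup hbdd n
    rw [show (1:ℝ) + (n:ℝ) = (n:ℝ) + 1 by ring] at this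
    linarith
  
/-- In the Łukasiewicz semiring, `g_x(y) = max 0 (x + y - 1)` has `y` as fixed
point iff `x = 1` or `y = 0`; the greatest-fixed-point map `G` satisfies
`G 1 = 1`, `G x = 0` for `x < 1`, and does not preserve the supremum of the
ascending chain `xₙ = 1 - 1/(1+n)`. -/
theorem stmt_12 :
    (∀ x ∈ Set.Icc (0 : ℝ) 1, ∀ y ∈ Set.Icc (0 : ℝ) 1,
      (max 0 (x + y - 1) = y ↔ x = 1 ∨ y = 0)) ∧
    lukGfp 1 = 1 ∧
    (∀ x ∈ Set.Icc (0 : ℝ) 1, x < 1 → lukGfp x = 0) ∧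
    (⨆ n : ℕ, (1 - 1 / (1 + (n : ℝ)))) = 1 ∧
    (⨆ n : ℕ, lukGfp (1 - 1 / (1 + (n : ℝ)))) = 0 ∧
    (⨆ n : ℕ, lukGfp (1 - 1 / (1 + (n : ℝ)))) ≠
      lukGfp (⨆ n : ℕ, (1 - 1 / (1 + (n : ℝ)))) := by
  have hzero : (⨆ n : ℕ, lukGfp (1 - 1 / (1 + (n : ℝ)))) = 0 := by
    have : ∀ n : ℕ, lukGfp (1 - 1 / (1 + (n:ℝ))) = 0 := fun n =>
      lukGfp_lt_one (chain_mem n) (chain_lt n)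
    simp only [one_div] at this ⊢
    simp [this]
  refine ⟨fun x hx y hy => luk_iff hx hy, lukGfp_one,
    fun x hx h => lukGfp_lt_one hx h, chain_sup, hzero, ?_⟩
  rw [hzero, chain_sup, lukGfp_one]
  norm_num
end

section
/- Let L and M be complete lattices and let f : L → M be a monotone function such that f(⊥) = ⊥, f(a ⊔ b) = f(a) ⊔ f(b) for all a, b ∈ L, and f(sup C) = sup{f(c) : c ∈ C} for every nonempty chain C ⊆ L. Then f(sup S) = sup{f(s) : s ∈ S} for every subset S ⊆ L. -/
open Ordinal Set

private theorem iSup_Iio_succ {N : Type*} [CompleteLattice N] (o : Ordinal)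
    (h : Ordinal → N) :
    (⨆ i : Set.Iio (Order.succ o), h i) = (⨆ i : Set.Iio o, h i) ⊔ h o := by
  apply le_antisymm
  · refine iSup_le fun i => ?_
    rcases lt_or_eq_of_le (Order.lt_succ_iff.mp (Set.mem_Iio.mp i.2)) with hi | hi
    · exact le_sup_of_le_left (le_iSup (fun j : Set.Iio o => h j) ⟨i, Set.mem_Iio.mpr hi⟩)
    · rw [hi]; exact le_sup_right
  · refine sup_le (iSup_le fun i => ?_) ?_
    · exact le_iSup (fun j : Set.Iio (Order.succ o) => h j)
        ⟨i, Set.mem_Iio.mpr ((Set.mem_Iio.mp i.2).trans (Order.lt_succ o))⟩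
    · exact le_iSup (fun j : Set.Iio (Order.succ o) => h j) ⟨o, Set.mem_Iio.mpr (Order.lt_succ o)⟩

private theorem aux_ord {L M : Type*} [CompleteLattice L] [CompleteLattice M]
    (f : L → M) (hmono : Monotone f) (hbot : f ⊥ = ⊥)
    (hjoin : ∀ a b : L, f (a ⊔ b) = f a ⊔ f b)
    (hchain : ∀ C : Set L, IsChain (· ≤ ·) C → C.Nonempty →
      f (sSup C) = sSup (f '' C)) :
    ∀ (o : Ordinal) (g : Ordinal → L),
      f (⨆ i : Set.Iio o, g i) = ⨆ i : Set.Iio o, f (g i) := by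
  intro o
  induction o using Ordinal.limitRecOn with
  | zero =>
    intro g
    have he : IsEmpty (Set.Iio (0 : Ordinal)) :=
      ⟨fun i => not_lt_of_ge (zero_le (a := i.1)) i.2⟩
    rw [iSup_of_empty, iSup_of_empty, hbot]
  | add_one o ih =>
    intro g
    rw [Ordinal.add_one_eq_succ, iSup_Iio_succ o g, hjoin, ih g, iSup_Iio_succ o fun i => f (g i)]
  | limit o ho ih =>
    intro g
    set t : Ordinal → L := fun β => ⨆ i : Set.Iio β, g i with ht
    have htmono : Monotone t := by
      intro β β' hβ
      exact iSup_le fun i => le_iSup (fun j : Set.Iio β' => g j) ⟨i, Set.mem_Iio.mpr (lt_of_lt_of_le (Set.mem_Iio.mp i.2) hβ)⟩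
    set C : Set L := t '' Set.Iio o with hC
    have hCchain : IsChain (· ≤ ·) C := by
      rintro x ⟨β, hβ, rfl⟩ y ⟨β', hβ', rfl⟩ _
      rcases le_total β β' with h | h
      · exact Or.inl (htmono h)
      · exact Or.inr (htmono h)
    have hCne : C.Nonempty := ⟨t 0, 0, ho.pos, rfl⟩
    -- sSup C = ⨆ i < o, g i
    have h1 : sSup C = ⨆ i : Set.Iio o, g i := by
      rw [hC, sSup_image]
      apply le_antisymm
      · refine iSup_le fun β => iSup_le fun hβ => iSup_le fun i => ?_
        exact le_iSup (fun j : Set.Iio o => g j) ⟨i, Set.mem_Iio.mpr (lt_trans (Set.mem_Iio.mp i.2) (Set.mem_Iio.mp hβ))⟩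
      · refine iSup_le fun i => ?_
        have hsi : Order.succ i.1 < o := ho.succ_lt (Set.mem_Iio.mp i.2)
        refine le_trans ?_ (le_iSup₂ (f := fun β (_ : β ∈ Set.Iio o) => t β)
          (Order.succ i.1) hsi)
        exact le_iSup (fun j : Set.Iio (Order.succ i.1) => g j) ⟨i, Set.mem_Iio.mpr (Order.lt_succ i.1)⟩
    have h2 : sSup (f '' C) = ⨆ i : Set.Iio o, f (g i) := by
      rw [hC, Set.image_image, sSup_image]
      apply le_antisymm
      · refine iSup_le fun β => iSup_le fun hβ => ?_
        rw [ih β hβ g]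
        refine iSup_le fun i => ?_
        exact le_iSup (fun j : Set.Iio o => f (g j)) ⟨i, Set.mem_Iio.mpr (lt_trans (Set.mem_Iio.mp i.2) (Set.mem_Iio.mp hβ))⟩
      · refine iSup_le fun i => ?_
        have hsi : Order.succ i.1 < o := ho.succ_lt (Set.mem_Iio.mp i.2)
        refine le_trans ?_ (le_iSup₂ (f := fun β (_ : β ∈ Set.Iio o) => f (t β))
          (Order.succ i.1) hsi)
        rw [ih _ hsi g]
        exact le_iSup (fun j : Set.Iio (Order.succ i.1) => f (g j)) ⟨i, Set.mem_Iio.mpr (Order.lt_succ i.1)⟩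
    rw [← h1, hchain C hCchain hCne, h2]

/-- If a monotone map between complete lattices preserves the bottom element,
binary joins, and suprema of nonempty chains, then it preserves suprema of
arbitrary subsets. -/
theorem stmt_14 {L M : Type*} [CompleteLattice L] [CompleteLattice M]
    (f : L → M) (hmono : Monotone f) (hbot : f ⊥ = ⊥)
    (hjoin : ∀ a b : L, f (a ⊔ b) = f a ⊔ f b)
    (hchain : ∀ C : Set L, IsChain (· ≤ ·) C → C.Nonempty →
      f (sSup C) = sSup (f '' C)) :
    ∀ S : Set L, f (sSup S) = sSup (f '' S) := by
  intro S
  rcases S.eq_empty_or_nonempty with rfl | ⟨s0, hs0⟩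
  · simp [hbot]
  · classical
    set r : S → S → Prop := WellOrderingRel with hr
    set o : Ordinal := Ordinal.type r with ho
    set g : Ordinal → L := fun i =>
      if h : i < o then ((Ordinal.enum r ⟨i, h⟩ : S) : L) else s0 with hg
    have hrange : Set.range (fun i : Set.Iio o => g i) = S := by
      ext s
      constructor
      · rintro ⟨i, rfl⟩
        simp only [hg]
        rw [dif_pos (Set.mem_Iio.mp i.2)]
        exact Subtype.coe_prop _
      · intro hs
        refine ⟨⟨Ordinal.typein r ⟨s, hs⟩, Ordinal.typein_lt_type r _⟩, ?_⟩
        simp only [hg, dif_pos (Ordinal.typein_lt_type r (⟨s, hs⟩ : S))]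
        rw [dif_pos (Ordinal.typein_lt_type r (⟨s, hs⟩ : S))]
        exact congrArg Subtype.val (Ordinal.enum_typein r ⟨s, hs⟩)
    have key := aux_ord f hmono hbot hjoin hchain o g
    calc f (sSup S) = f (⨆ i : Set.Iio o, g i) := by rw [← hrange, sSup_range]
      _ = ⨆ i : Set.Iio o, f (g i) := key
      _ = sSup (f '' S) := by
          rw [← hrange, ← Set.range_comp, sSup_range]
          rfl
end

section
/- (Associativity of infinite products) Let K be a naturally ordered, absorptive, fully continuous commutative semiring in which every subset has a greatest lower bound (which holds automatically since the natural order of such a semiring is a complete lattice). Let x : I → K be a family whose set of values {xᵢ : i ∈ I} is countable, and let I = I₁ ∪ I₂ be a partition of I into two disjoint sets. Then Prod_{i∈I} xᵢ = (Prod_{i∈I₁} xᵢ) · (Prod_{i∈I₂} xᵢ), where Prod_{i∈J} xᵢ := inf{∏_{i∈F} xᵢ : F ⊆ J finite}. In particular, for any c ∈ K, c · Prod_{i∈I} xᵢ equals the infinite product of the family extended by one additional index with value c. -/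
/-- The set of finite subproducts of a family `x : I → K` over finite subsets
`F ⊆ J`. -/
def subProds {K : Type*} [CommSemiring K] {I : Type*} (x : I → K) (J : Set I) :
    Set K :=
  {p : K | ∃ F : Finset I, ↑F ⊆ J ∧ p = ∏ i ∈ F, x i}

lemma subProds_nonempty {K : Type*} [CommSemiring K] {I : Type*} (x : I → K) (J : Set I) :
    (subProds x J).Nonempty :=
  ⟨1, ∅, by simp⟩

lemma subProds_countable {K : Type*} [CommSemiring K] {I : Type*} (x : I → K)
    (hcount : (Set.range x).Countable) (J : Set I) : (subProds x J).Countable := by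
  have : Countable ↥(Set.range x) := hcount.to_subtype
  have hR : (Set.range fun m : Multiset ↥(Set.range x) => (m.map Subtype.val).prod).Countable :=
    Set.countable_range _
  refine hR.mono ?_
  rintro _ ⟨F, -, rfl⟩
  refine ⟨F.val.map fun i => (⟨x i, Set.mem_range_self i⟩ : ↥(Set.range x)), ?_⟩
  rw [Finset.prod_eq_multiset_prod]
  simp only [Multiset.map_map]
  rfl

/-- From a countable subProds set, extract a cofinal antitone sequence of finite
subproducts. -/
lemma subProds_chain {K : Type*} [CommSemiring K] {I : Type*} (x : I → K)
    (hcount : (Set.range x).Countable) (J : Set I) :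
    ∃ G : ℕ → Finset I, Monotone G ∧ (∀ n, ↑(G n) ⊆ J) ∧
      ∀ s ∈ subProds x J, ∃ n F, F ⊆ G n ∧ s = ∏ i ∈ F, x i := by
  classical
  obtain ⟨g, hg⟩ := (subProds_countable x hcount J).exists_eq_range (subProds_nonempty x J)
  have hmem : ∀ n, g n ∈ subProds x J := fun n => hg ▸ Set.mem_range_self n
  choose F hF hFe using hmem
  refine ⟨fun n => (Finset.range (n + 1)).biUnion F, ?_, ?_, ?_⟩
  · intro m n hmn
    exact Finset.biUnion_subset_biUnion_of_subset_left _
      (Finset.range_subset_range.2 (Nat.succ_le_succ hmn))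
  · intro n i hi
    simp only [Finset.coe_biUnion, Set.mem_iUnion] at hi
    obtain ⟨k, -, hk⟩ := hi
    exact hF k hk
  · intro s hs
    rw [hg] at hs
    obtain ⟨n, rfl⟩ := hs
    exact ⟨n, F n, Finset.subset_biUnion_of_mem F (Finset.self_mem_range_succ n), hFe n⟩


lemma prod_split {K : Type*} [CommSemiring K] [PartialOrder K]
    (hord : ∀ a b : K, a ≤ b ↔ ∃ c : K, a + c = b)
    (habs : ∀ a b : K, a + a * b = a)
    (hmulinf : ∀ (a : K) (C : Set K), IsChain (· ≤ ·) C → C.Nonempty →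
      ∀ i, IsGLB C i → IsGLB ((fun c => a * c) '' C) (a * i))
    {I : Type*} (x : I → K) (hcount : (Set.range x).Countable)
    (I₁ I₂ : Set I) (hdisj : Disjoint I₁ I₂) (hunion : I₁ ∪ I₂ = Set.univ)
    (p p₁ p₂ : K)
    (hp : IsGLB (subProds x Set.univ) p)
    (hp₁ : IsGLB (subProds x I₁) p₁)
    (hp₂ : IsGLB (subProds x I₂) p₂) :
    p = p₁ * p₂ := by
  classical
  have hle : ∀ a b : K, a * b ≤ a := fun a b =>
    (hord _ _).2 ⟨a, by rw [add_comm]; exact habs a b⟩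
  have hmono : ∀ {a b : K} (c : K), a ≤ b → a * c ≤ b * c := by
    intro a b c hab
    obtain ⟨d, hd⟩ := (hord _ _).1 hab
    exact (hord _ _).2 ⟨d * c, by rw [← add_mul, hd]⟩
  have hprodmono : ∀ F G : Finset I, F ⊆ G → (∏ i ∈ G, x i) ≤ ∏ i ∈ F, x i := by
    intro F G hFG
    rw [← Finset.prod_sdiff hFG, mul_comm]
    exact hle _ _
  obtain ⟨G₁, hG₁m, hG₁s, hG₁c⟩ := subProds_chain x hcount I₁
  obtain ⟨G₂, hG₂m, hG₂s, hG₂c⟩ := subProds_chain x hcount I₂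
  set u : ℕ → K := fun n => ∏ i ∈ G₁ n, x i with hu_def
  set t : ℕ → K := fun n => ∏ i ∈ G₂ n, x i with ht_def
  have hu_anti : Antitone u := fun m n hmn => hprodmono _ _ (hG₁m hmn)
  have ht_anti : Antitone t := fun m n hmn => hprodmono _ _ (hG₂m hmn)
  have hu_chain : IsChain (· ≤ ·) (Set.range u) := by
    rintro _ ⟨m, rfl⟩ _ ⟨n, rfl⟩ -
    rcases le_total m n with h | h
    · exact Or.inr (hu_anti h)
    · exact Or.inl (hu_anti h)
  have ht_chain : IsChain (· ≤ ·) (Set.range t) := by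
    rintro _ ⟨m, rfl⟩ _ ⟨n, rfl⟩ -
    rcases le_total m n with h | h
    · exact Or.inr (ht_anti h)
    · exact Or.inl (ht_anti h)
  have hu_glb : IsGLB (Set.range u) p₁ := by
    constructor
    · rintro _ ⟨n, rfl⟩; exact hp₁.1 ⟨G₁ n, hG₁s n, rfl⟩
    · intro b hb
      refine hp₁.2 fun s hs => ?_
      obtain ⟨n, F, hFsub, rfl⟩ := hG₁c s hs
      exact le_trans (hb ⟨n, rfl⟩) (hprodmono F (G₁ n) hFsub)
  have ht_glb : IsGLB (Set.range t) p₂ := by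
    constructor
    · rintro _ ⟨n, rfl⟩; exact hp₂.1 ⟨G₂ n, hG₂s n, rfl⟩
    · intro b hb
      refine hp₂.2 fun s hs => ?_
      obtain ⟨n, F, hFsub, rfl⟩ := hG₂c s hs
      exact le_trans (hb ⟨n, rfl⟩) (hprodmono F (G₂ n) hFsub)
  apply le_antisymm
  · have himg := hmulinf p₁ (Set.range t) ht_chain ⟨t 0, 0, rfl⟩ p₂ ht_glb
    refine himg.2 ?_
    rintro _ ⟨_, ⟨n, rfl⟩, rfl⟩
    have himg2 := hmulinf (t n) (Set.range u) hu_chain ⟨u 0, 0, rfl⟩ p₁ hu_glb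
    have hptn : p ≤ t n * p₁ := by
      refine himg2.2 ?_
      rintro _ ⟨_, ⟨m, rfl⟩, rfl⟩
      have hdFin : Disjoint (G₂ n) (G₁ m) := by
        rw [Finset.disjoint_left]
        intro a ha ha'
        exact Set.disjoint_left.1 hdisj (hG₁s m ha') (hG₂s n ha)
      show p ≤ t n * u m
      have : t n * u m = ∏ i ∈ G₂ n ∪ G₁ m, x i := (Finset.prod_union hdFin).symm
      rw [this]
      exact hp.1 ⟨G₂ n ∪ G₁ m, by simp, rfl⟩
    show p ≤ p₁ * t n
    rwa [mul_comm] at hptn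
  · refine hp.2 ?_
    rintro s ⟨F, -, rfl⟩
    have h1 : p₁ ≤ ∏ i ∈ F.filter (· ∈ I₁), x i := by
      refine hp₁.1 ⟨_, ?_, rfl⟩
      intro i hi
      exact (Finset.mem_filter.1 (by exact_mod_cast hi)).2
    have h2 : p₂ ≤ ∏ i ∈ F.filter (fun i => ¬ i ∈ I₁), x i := by
      refine hp₂.1 ⟨_, ?_, rfl⟩
      intro i hi
      have hi' := Finset.mem_filter.1 (by exact_mod_cast hi)
      have : i ∈ I₁ ∪ I₂ := hunion ▸ Set.mem_univ i
      exact this.resolve_left hi'.2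
    calc p₁ * p₂ ≤ (∏ i ∈ F.filter (· ∈ I₁), x i) * p₂ := hmono _ h1
      _ ≤ (∏ i ∈ F.filter (· ∈ I₁), x i) * ∏ i ∈ F.filter (fun i => ¬ i ∈ I₁), x i := by
          rw [mul_comm _ p₂, mul_comm _ (∏ i ∈ F.filter (fun i => ¬ i ∈ I₁), x i)]
          exact hmono _ h2
      _ = ∏ i ∈ F, x i := Finset.prod_filter_mul_prod_filter_not F _ x

/-- (Associativity of infinite products) In a naturally ordered, absorptive,
fully continuous commutative semiring with all infima, for a family with
countably many values and a partition `I = I₁ ∪ I₂`,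
`Prod_{i∈I} xᵢ = (Prod_{i∈I₁} xᵢ) · (Prod_{i∈I₂} xᵢ)`; in particular
multiplying by `c` equals the infinite product of the family extended by one
index with value `c`. -/
theorem stmt_16 {K : Type*} [CommSemiring K] [PartialOrder K]
    (h01 : (0 : K) ≠ 1)
    (hord : ∀ a b : K, a ≤ b ↔ ∃ c : K, a + c = b)
    (habs : ∀ a b : K, a + a * b = a)
    (hcc : ∀ C : Set K, IsChain (· ≤ ·) C →
      (∃ s, IsLUB C s) ∧ (∃ i, IsGLB C i))
    (haddsup : ∀ (a : K) (C : Set K), IsChain (· ≤ ·) C → C.Nonempty →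
      ∀ s, IsLUB C s → IsLUB ((fun c => a + c) '' C) (a + s))
    (haddinf : ∀ (a : K) (C : Set K), IsChain (· ≤ ·) C → C.Nonempty →
      ∀ i, IsGLB C i → IsGLB ((fun c => a + c) '' C) (a + i))
    (hmulsup : ∀ (a : K) (C : Set K), IsChain (· ≤ ·) C → C.Nonempty →
      ∀ s, IsLUB C s → IsLUB ((fun c => a * c) '' C) (a * s))
    (hmulinf : ∀ (a : K) (C : Set K), IsChain (· ≤ ·) C → C.Nonempty →
      ∀ i, IsGLB C i → IsGLB ((fun c => a * c) '' C) (a * i))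
    (hglb : ∀ S : Set K, ∃ i, IsGLB S i)
    {I : Type*} (x : I → K) (hcount : (Set.range x).Countable)
    (I₁ I₂ : Set I) (hdisj : Disjoint I₁ I₂) (hunion : I₁ ∪ I₂ = Set.univ)
    (p p₁ p₂ : K)
    (hp : IsGLB (subProds x Set.univ) p)
    (hp₁ : IsGLB (subProds x I₁) p₁)
    (hp₂ : IsGLB (subProds x I₂) p₂) :
    p = p₁ * p₂ ∧
    ∀ c q : K,
      IsGLB (subProds (fun o : Option I => o.elim c x) Set.univ) q →
      c * p = q := by
  classical
  refine ⟨prod_split hord habs hmulinf x hcount I₁ I₂ hdisj hunion p p₁ p₂ hp hp₁ hp₂, ?_⟩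
  intro c q hq
  set y : Option I → K := fun o => o.elim c x with hy
  have hle : ∀ a b : K, a * b ≤ a := fun a b =>
    (hord _ _).2 ⟨a, by rw [add_comm]; exact habs a b⟩
  have hcount' : (Set.range y).Countable := by
    refine (hcount.insert c).mono ?_
    rintro _ ⟨o, rfl⟩
    cases o with
    | none => exact Set.mem_insert _ _
    | some i => exact Set.mem_insert_of_mem _ ⟨i, rfl⟩
  have hq₁ : IsGLB (subProds y {o : Option I | o = none}) c := by
    constructor
    · rintro s ⟨F, hF, rfl⟩
      have hFs : F ⊆ {none} := fun o ho => Finset.mem_singleton.2 (hF ho)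
      rcases Finset.subset_singleton_iff.1 hFs with rfl | rfl
      · simpa using hle 1 c
      · simp [y]
    · intro b hb
      exact hb ⟨{none}, by simp, by simp [y]⟩
  have hsets : subProds y {o : Option I | o ≠ none} = subProds x Set.univ := by
    ext s
    constructor
    · rintro ⟨F, hF, rfl⟩
      refine ⟨F.eraseNone, by simp, ?_⟩
      rw [Finset.prod_eraseNone]
      refine Finset.prod_congr rfl fun o ho => ?_
      cases o with
      | none => exact absurd rfl (hF ho)
      | some i => rfl
    · rintro ⟨F, -, rfl⟩
      refine ⟨F.map Function.Embedding.some, ?_, ?_⟩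
      · intro o ho
        simp only [Finset.coe_map, Set.mem_image] at ho
        obtain ⟨i, -, rfl⟩ := ho
        simp
      · rw [Finset.prod_map]
        rfl
  have hq₂ : IsGLB (subProds y {o : Option I | o ≠ none}) p := hsets ▸ hp
  have hdisj' : Disjoint {o : Option I | o = none} {o : Option I | o ≠ none} := by
    rw [Set.disjoint_left]
    intro o ho ho'
    exact ho' ho
  have hunion' : {o : Option I | o = none} ∪ {o : Option I | o ≠ none} = Set.univ := by
    ext o; by_cases h : o = none <;> simp [h]
  exact (prod_split hord habs hmulinf y hcount' _ _ hdisj' hunion' q c p hq hq₁ hq₂).symm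
end

section
/- Let K and K' be naturally ordered, absorptive, fully continuous commutative semirings in which every subset has a greatest lower bound, and let h : K → K' be a semiring homomorphism (h(0) = 0, h(1) = 1, h(a+b) = h(a)+h(b), h(a·b) = h(a)·h(b)) that preserves suprema and infima of nonempty chains. Let x : I → K be a family whose set of values is countable. Then h(Prod_{i∈I} xᵢ) = Prod_{i∈I} h(xᵢ), where Prod_{i∈J} yᵢ := inf{∏_{i∈F} yᵢ : F ⊆ J finite}. -/
/-- A fully continuous semiring homomorphism between naturally ordered,
absorptive, fully continuous commutative semirings with all infima preserves
infinite products of families with countably many values. -/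
theorem stmt_17 {K K' : Type*} [CommSemiring K] [PartialOrder K]
    [CommSemiring K'] [PartialOrder K']
    (h01 : (0 : K) ≠ 1)
    (hord : ∀ a b : K, a ≤ b ↔ ∃ c : K, a + c = b)
    (habs : ∀ a b : K, a + a * b = a)
    (hcc : ∀ C : Set K, IsChain (· ≤ ·) C →
      (∃ s, IsLUB C s) ∧ (∃ i, IsGLB C i))
    (haddsup : ∀ (a : K) (C : Set K), IsChain (· ≤ ·) C → C.Nonempty →
      ∀ s, IsLUB C s → IsLUB ((fun c => a + c) '' C) (a + s))
    (haddinf : ∀ (a : K) (C : Set K), IsChain (· ≤ ·) C → C.Nonempty →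
      ∀ i, IsGLB C i → IsGLB ((fun c => a + c) '' C) (a + i))
    (hmulsup : ∀ (a : K) (C : Set K), IsChain (· ≤ ·) C → C.Nonempty →
      ∀ s, IsLUB C s → IsLUB ((fun c => a * c) '' C) (a * s))
    (hmulinf : ∀ (a : K) (C : Set K), IsChain (· ≤ ·) C → C.Nonempty →
      ∀ i, IsGLB C i → IsGLB ((fun c => a * c) '' C) (a * i))
    (h01' : (0 : K') ≠ 1)
    (hord' : ∀ a b : K', a ≤ b ↔ ∃ c : K', a + c = b)
    (habs' : ∀ a b : K', a + a * b = a)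
    (hcc' : ∀ C : Set K', IsChain (· ≤ ·) C →
      (∃ s, IsLUB C s) ∧ (∃ i, IsGLB C i))
    (haddsup' : ∀ (a : K') (C : Set K'), IsChain (· ≤ ·) C → C.Nonempty →
      ∀ s, IsLUB C s → IsLUB ((fun c => a + c) '' C) (a + s))
    (haddinf' : ∀ (a : K') (C : Set K'), IsChain (· ≤ ·) C → C.Nonempty →
      ∀ i, IsGLB C i → IsGLB ((fun c => a + c) '' C) (a + i))
    (hmulsup' : ∀ (a : K') (C : Set K'), IsChain (· ≤ ·) C → C.Nonempty →
      ∀ s, IsLUB C s → IsLUB ((fun c => a * c) '' C) (a * s))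
    (hmulinf' : ∀ (a : K') (C : Set K'), IsChain (· ≤ ·) C → C.Nonempty →
      ∀ i, IsGLB C i → IsGLB ((fun c => a * c) '' C) (a * i))
    (hglb : ∀ S : Set K, ∃ i, IsGLB S i)
    (hglb' : ∀ S : Set K', ∃ i, IsGLB S i)
    (h : K → K')
    (h0 : h 0 = 0) (h1 : h 1 = 1)
    (hadd : ∀ a b : K, h (a + b) = h a + h b)
    (hmul : ∀ a b : K, h (a * b) = h a * h b)
    (hsup : ∀ (C : Set K), IsChain (· ≤ ·) C → C.Nonempty →
      ∀ s, IsLUB C s → IsLUB (h '' C) (h s))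
    (hinf : ∀ (C : Set K), IsChain (· ≤ ·) C → C.Nonempty →
      ∀ i, IsGLB C i → IsGLB (h '' C) (h i))
    {I : Type*} (x : I → K) (hcount : (Set.range x).Countable)
    (p : K) (hp : IsGLB (subProds x Set.univ) p)
    (q : K') (hq : IsGLB (subProds (fun i => h (x i)) Set.univ) q) :
    h p = q := by

  classical
  set S := subProds x Set.univ with hSdef
  -- h is monotone
  have hmono : ∀ a b : K, a ≤ b → h a ≤ h b := by
    intro a b hab
    obtain ⟨c, hc⟩ := (hord a b).1 hab
    exact (hord' (h a) (h b)).2 ⟨h c, by rw [← hadd, hc]⟩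
  -- products are decreasing
  have hmul_le : ∀ a b : K, a * b ≤ a := fun a b =>
    (hord _ _).2 ⟨a, by rw [add_comm]; exact habs a b⟩
  -- h commutes with finite products
  have hprodh : ∀ F : Finset I, h (∏ i ∈ F, x i) = ∏ i ∈ F, h (x i) := by
    intro F
    induction F using Finset.induction_on with
    | empty => simpa using h1
    | insert _ _ hni ih =>
        rw [Finset.prod_insert hni, Finset.prod_insert hni, hmul, ih]
  -- S is countable
  have hxsub : Countable ↥(Set.range x) := hcount.to_subtype
  have hScount : S.Countable := by
    have hsub : S ⊆ Set.range
        (fun l : List ↥(Set.range x) => (l.map Subtype.val).prod) := by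
      rintro _ ⟨F, -, rfl⟩
      refine ⟨F.toList.map (fun i => ⟨x i, Set.mem_range_self i⟩), ?_⟩
      show (List.map Subtype.val (List.map (fun i => (⟨x i, Set.mem_range_self i⟩ : ↥(Set.range x))) F.toList)).prod = _
      rw [List.map_map]
      exact Finset.prod_map_toList F x
    exact Set.Countable.mono hsub (Set.countable_range _)
  -- S is downward directed
  have hSdir : ∀ a ∈ S, ∀ b ∈ S, ∃ d ∈ S, d ≤ a ∧ d ≤ b := by
    rintro _ ⟨F1, -, rfl⟩ _ ⟨F2, -, rfl⟩
    refine ⟨∏ i ∈ F1 ∪ F2, x i,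
      ⟨F1 ∪ F2, by simp, rfl⟩, ?_, ?_⟩
    · rw [← Finset.union_sdiff_self_eq_union,
        Finset.prod_union Finset.disjoint_sdiff]
      exact hmul_le _ _
    · rw [Finset.union_comm, ← Finset.union_sdiff_self_eq_union,
        Finset.prod_union Finset.disjoint_sdiff]
      exact hmul_le _ _
  have hSne : S.Nonempty := ⟨1, ⟨∅, by simp⟩⟩
  -- choice function for directedness
  have D : ∀ a b : K, ∃ d : K, a ∈ S → b ∈ S → d ∈ S ∧ d ≤ a ∧ d ≤ b := by
    intro a b
    by_cases ha : a ∈ S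
    · by_cases hb : b ∈ S
      · obtain ⟨d, hd⟩ := hSdir a ha b hb
        exact ⟨d, fun _ _ => hd⟩
      · exact ⟨1, fun _ hb' => absurd hb' hb⟩
    · exact ⟨1, fun ha' => absurd ha' ha⟩
  choose d hd using D
  -- enumerate S
  obtain ⟨s, hsS⟩ := hScount.exists_eq_range hSne
  have hsmem : ∀ n, s n ∈ S := fun n => hsS ▸ Set.mem_range_self n
  -- decreasing cofinal sequence
  let c : ℕ → K := fun n => Nat.rec (s 0) (fun n cn => d cn (s (n + 1))) n
  have hc0 : c 0 = s 0 := rfl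
  have hcsucc : ∀ n, c (n + 1) = d (c n) (s (n + 1)) := fun n => rfl
  have hcmem : ∀ n, c n ∈ S := by
    intro n
    induction n with
    | zero => rw [hc0]; exact hsmem 0
    | succ n ih =>
        rw [hcsucc n]
        exact (hd (c n) (s (n + 1)) ih (hsmem (n + 1))).1
  have hcdec : ∀ n, c (n + 1) ≤ c n := by
    intro n
    rw [hcsucc n]
    exact (hd (c n) (s (n + 1)) (hcmem n) (hsmem (n + 1))).2.1
  have hcs : ∀ n, c n ≤ s n := by
    intro n
    cases n with
    | zero => rw [hc0]
    | succ n =>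
        rw [hcsucc n]
        exact (hd (c n) (s (n + 1)) (hcmem n) (hsmem (n + 1))).2.2
  have hant : Antitone c := antitone_nat_of_succ_le hcdec
  have hchain : IsChain (· ≤ ·) (Set.range c) := by
    rintro _ ⟨m, rfl⟩ _ ⟨n, rfl⟩ -
    rcases le_total m n with hmn | hmn
    · exact Or.inr (hant hmn)
    · exact Or.inl (hant hmn)
  have hcne : (Set.range c).Nonempty := ⟨c 0, 0, rfl⟩
  have hrsub : Set.range c ⊆ S := by rintro _ ⟨n, rfl⟩; exact hcmem n
  -- lower bounds agree
  have hlbeq : lowerBounds (Set.range c) = lowerBounds S := by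
    apply Set.Subset.antisymm
    · intro b hb a ha
      rw [hsS] at ha
      obtain ⟨n, rfl⟩ := ha
      exact le_trans (hb ⟨n, rfl⟩) (hcs n)
    · exact fun b hb => fun a ha => hb (hrsub ha)
  have hpc : IsGLB (Set.range c) p := by
    constructor
    · exact fun a ha => hp.1 (hrsub ha)
    · intro b hb
      exact hp.2 (hlbeq ▸ hb)
  -- apply continuity of h
  have himg : IsGLB (h '' Set.range c) (h p) := hinf _ hchain hcne p hpc
  -- transfer to target set
  have hTeq : lowerBounds (h '' Set.range c)
      = lowerBounds (subProds (fun i => h (x i)) Set.univ) := by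
    apply Set.Subset.antisymm
    · rintro b hb _ ⟨F, -, rfl⟩
      have hFS : (∏ i ∈ F, x i) ∈ S := ⟨F, by simp, rfl⟩
      rw [hsS] at hFS
      obtain ⟨n, hn⟩ := hFS
      have : b ≤ h (c n) := hb ⟨c n, ⟨n, rfl⟩, rfl⟩
      calc b ≤ h (c n) := this
        _ ≤ h (s n) := hmono _ _ (hcs n)
        _ = ∏ i ∈ F, h (x i) := by rw [hn, hprodh]
    · rintro b hb _ ⟨_, ⟨n, rfl⟩, rfl⟩
      obtain ⟨F, -, hF⟩ := hcmem n
      rw [hF, hprodh]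
      exact hb ⟨F, by simp, rfl⟩
  have hfin : IsGLB (subProds (fun i => h (x i)) Set.univ) (h p) := by
    constructor
    · exact hTeq ▸ himg.1
    · intro b hb
      exact himg.2 (by rw [hTeq]; exact hb)
  exact hfin.unique hq
end

section
/- (Grouping of infinite products by value) Let K be a naturally ordered, absorptive, fully continuous commutative semiring in which every subset has a greatest lower bound. Let x : I → K be a family whose range is a finite set {a₁, …, a_k} of pairwise distinct elements, and for each j let n_j ∈ ℕ ∪ {∞} be the cardinality of the fiber {i ∈ I : xᵢ = a_j} (with n_j = ∞ if the fiber is infinite). Then Prod_{i∈I} xᵢ = ∏_{j=1}^{k} a_j^{n_j}, where a^n is the ordinary n-th power for n ∈ ℕ and a^∞ := inf{aⁿ : n ≥ 1}, and Prod_{i∈I} xᵢ := inf{∏_{i∈F} xᵢ : F ⊆ I finite}. -/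
section aux

variable {K : Type*} [CommSemiring K] [PartialOrder K]

lemma aux_mul_le_left (hord : ∀ a b : K, a ≤ b ↔ ∃ c : K, a + c = b)
    (habs : ∀ a b : K, a + a * b = a) (a b : K) : a * b ≤ a :=
  (hord _ _).2 ⟨a, by rw [add_comm]; exact habs a b⟩

lemma aux_le_one (hord : ∀ a b : K, a ≤ b ↔ ∃ c : K, a + c = b)
    (habs : ∀ a b : K, a + a * b = a) (a : K) : a ≤ 1 := by
  have h := habs 1 a
  rw [one_mul] at h
  exact (hord _ _).2 ⟨1, by rw [add_comm]; exact h⟩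

lemma aux_pow_anti (hord : ∀ a b : K, a ≤ b ↔ ∃ c : K, a + c = b)
    (habs : ∀ a b : K, a + a * b = a) (a : K) {m n : ℕ} (h : m ≤ n) :
    a ^ n ≤ a ^ m := by
  obtain ⟨t, rfl⟩ := Nat.exists_eq_add_of_le h
  rw [pow_add]
  exact aux_mul_le_left hord habs _ _

lemma aux_mul_le_mul_left (hord : ∀ a b : K, a ≤ b ↔ ∃ c : K, a + c = b)
    {a b : K} (h : a ≤ b) (c : K) : c * a ≤ c * b := by
  obtain ⟨d, hd⟩ := (hord a b).1 h
  exact (hord _ _).2 ⟨c * d, by rw [← mul_add, hd]⟩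

lemma aux_mul_le_mul (hord : ∀ a b : K, a ≤ b ↔ ∃ c : K, a + c = b)
    {a b c d : K} (h1 : a ≤ b) (h2 : c ≤ d) : a * c ≤ b * d := by
  calc a * c ≤ a * d := aux_mul_le_mul_left hord h2 a
    _ = d * a := mul_comm _ _
    _ ≤ d * b := aux_mul_le_mul_left hord h1 d
    _ = b * d := mul_comm _ _

lemma aux_prod_le_prod (hord : ∀ a b : K, a ≤ b ↔ ∃ c : K, a + c = b)
    {ι : Type*} (s : Finset ι) (f g : ι → K) (h : ∀ j ∈ s, f j ≤ g j) :
    ∏ j ∈ s, f j ≤ ∏ j ∈ s, g j := by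
  classical
  induction s using Finset.induction_on with
  | empty => simp
  | insert j s hj ih =>
    rw [Finset.prod_insert hj, Finset.prod_insert hj]
    exact aux_mul_le_mul hord (h j (Finset.mem_insert_self _ _))
      (ih fun j' hj' => h j' (Finset.mem_insert_of_mem hj'))

end aux

/-- (Grouping of infinite products by value) In a naturally ordered,
absorptive, fully continuous commutative semiring with all infima, the
infinite product of a family with finite range `{a₁, …, a_k}` equals
`∏ⱼ aⱼ^{nⱼ}` where `nⱼ` is the (possibly infinite) cardinality of the fiber
over `aⱼ`, and `a^∞` is the infimum of `{aⁿ : n ≥ 1}`. -/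
theorem stmt_19 {K : Type*} [CommSemiring K] [PartialOrder K]
    (h01 : (0 : K) ≠ 1)
    (hord : ∀ a b : K, a ≤ b ↔ ∃ c : K, a + c = b)
    (habs : ∀ a b : K, a + a * b = a)
    (hcc : ∀ C : Set K, IsChain (· ≤ ·) C →
      (∃ s, IsLUB C s) ∧ (∃ i, IsGLB C i))
    (haddsup : ∀ (a : K) (C : Set K), IsChain (· ≤ ·) C → C.Nonempty →
      ∀ s, IsLUB C s → IsLUB ((fun c => a + c) '' C) (a + s))
    (haddinf : ∀ (a : K) (C : Set K), IsChain (· ≤ ·) C → C.Nonempty →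
      ∀ i, IsGLB C i → IsGLB ((fun c => a + c) '' C) (a + i))
    (hmulsup : ∀ (a : K) (C : Set K), IsChain (· ≤ ·) C → C.Nonempty →
      ∀ s, IsLUB C s → IsLUB ((fun c => a * c) '' C) (a * s))
    (hmulinf : ∀ (a : K) (C : Set K), IsChain (· ≤ ·) C → C.Nonempty →
      ∀ i, IsGLB C i → IsGLB ((fun c => a * c) '' C) (a * i))
    (hglb : ∀ S : Set K, ∃ i, IsGLB S i)
    {I : Type*} (x : I → K)
    {k : ℕ} (a : Fin k → K) (hinj : Function.Injective a)
    (hrange : Set.range x = Set.range a)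
    (w : Fin k → K)
    (hwfin : ∀ j : Fin k, {i : I | x i = a j}.Finite →
      w j = a j ^ ({i : I | x i = a j}.ncard))
    (hwinf : ∀ j : Fin k, ¬ {i : I | x i = a j}.Finite →
      IsGLB {y : K | ∃ n : ℕ, 1 ≤ n ∧ y = a j ^ n} (w j))
    (p : K) (hp : IsGLB (subProds x Set.univ) p) :
    p = ∏ j, w j := by
  classical
  set fib : Fin k → Set I := fun j => {i : I | x i = a j} with hfib
  -- w j is below any admissible power of a j
  have hle_pow : ∀ (j : Fin k) (m : ℕ), ((fib j).Finite → m ≤ (fib j).ncard) →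
      w j ≤ a j ^ m := by
    intro j m hm
    by_cases hf : (fib j).Finite
    · rw [hwfin j hf]
      exact aux_pow_anti hord habs _ (hm hf)
    · have hglbj := hwinf j hf
      rcases Nat.eq_zero_or_pos m with rfl | hm1
      · calc w j ≤ a j ^ 1 := hglbj.1 ⟨1, le_refl 1, rfl⟩
          _ = a j := pow_one _
          _ ≤ 1 := aux_le_one hord habs _
          _ = a j ^ 0 := (pow_zero _).symm
      · exact hglbj.1 ⟨m, hm1, rfl⟩
  -- product over a disjoint union of pieces of fibers
  have hprod_fibers : ∀ G : Fin k → Finset I, (∀ j, ∀ i ∈ G j, x i = a j) →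
      ∏ i ∈ Finset.univ.biUnion G, x i = ∏ j, a j ^ (G j).card := by
    intro G hG
    rw [Finset.prod_biUnion]
    · exact Finset.prod_congr rfl fun j _ => by
        rw [Finset.prod_congr rfl (hG j), Finset.prod_const]
    · intro j _ j' _ hjj'
      simp only [Function.onFun]
      rw [Finset.disjoint_left]
      intro i hi hi'
      exact hjj' (hinj ((hG j i hi).symm.trans (hG j' i hi')))
  -- every admissible power-product is a finite subproduct
  have hmemT : ∀ m : Fin k → ℕ, (∀ j, (fib j).Finite → m j ≤ (fib j).ncard) →
      (∏ j, a j ^ m j) ∈ subProds x Set.univ := by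
    intro m hm
    have hex : ∀ j, ∃ F : Finset I, ↑F ⊆ fib j ∧ F.card = m j := by
      intro j
      by_cases hf : (fib j).Finite
      · have hcard : m j ≤ hf.toFinset.card := by
          rw [← Set.ncard_eq_toFinset_card _ hf]; exact hm j hf
        obtain ⟨t, hts, htc⟩ := Finset.exists_subset_card_eq hcard
        refine ⟨t, ?_, htc⟩
        rw [← hf.coe_toFinset]
        exact_mod_cast hts
      · exact Set.Infinite.exists_subset_card_eq hf (m j)
    choose G hG1 hG2 using hex
    refine ⟨Finset.univ.biUnion G, by simp, ?_⟩
    rw [hprod_fibers G (fun j i hi => hG1 j hi)]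
    exact Finset.prod_congr rfl fun j _ => by rw [hG2 j]
  -- downward: ∏ w is a lower bound of all finite subproducts
  have hlb : ∀ F : Finset I, (∏ j, w j) ≤ ∏ i ∈ F, x i := by
    intro F
    set G : Fin k → Finset I := fun j => F.filter (fun i => x i = a j) with hG
    have hFeq : F = Finset.univ.biUnion G := by
      ext i
      simp only [Finset.mem_biUnion, Finset.mem_univ, true_and, hG,
        Finset.mem_filter]
      constructor
      · intro hi
        have : x i ∈ Set.range a := hrange ▸ Set.mem_range_self i
        obtain ⟨j, hj⟩ := this
        exact ⟨j, hi, hj.symm⟩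
      · rintro ⟨j, hj, -⟩
        exact hj
    rw [hFeq, hprod_fibers G (fun j i hi => (Finset.mem_filter.1 hi).2)]
    refine aux_prod_le_prod hord _ _ _ fun j _ => hle_pow j _ fun hf => ?_
    rw [Set.ncard_eq_toFinset_card _ hf]
    refine Finset.card_le_card fun i hi => ?_
    rw [Set.Finite.mem_toFinset]
    exact (Finset.mem_filter.1 hi).2
  -- upward: any lower bound of all admissible power-products is ≤ ∏ w
  have claim : ∀ s : Finset (Fin k), ∀ c q : K,
      (∀ m : Fin k → ℕ, (∀ j, (fib j).Finite → m j ≤ (fib j).ncard) →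
        q ≤ c * ∏ j ∈ s, a j ^ m j) → q ≤ c * ∏ j ∈ s, w j := by
    intro s
    induction s using Finset.induction_on with
    | empty =>
      intro c q h
      simpa using h (fun _ => 0) (fun _ _ => Nat.zero_le _)
    | insert j0 s hj0 ih =>
      intro c q h
      have hstep : ∀ n : ℕ, ((fib j0).Finite → n ≤ (fib j0).ncard) →
          q ≤ (c * ∏ j ∈ s, w j) * a j0 ^ n := by
        intro n hn
        have := ih (c * a j0 ^ n) q ?_
        · calc q ≤ c * a j0 ^ n * ∏ j ∈ s, w j := this
            _ = (c * ∏ j ∈ s, w j) * a j0 ^ n := by ring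
        · intro m hm
          have hadm : ∀ j, (fib j).Finite →
              Function.update m j0 n j ≤ (fib j).ncard := by
            intro j hf
            by_cases hjj : j = j0
            · subst hjj; rw [Function.update_self]; exact hn hf
            · rw [Function.update_of_ne hjj]; exact hm j hf
          have h2 := h (Function.update m j0 n) hadm
          rw [Finset.prod_insert hj0, Function.update_self] at h2
          have h3 : ∏ j ∈ s, a j ^ Function.update m j0 n j
              = ∏ j ∈ s, a j ^ m j :=
            Finset.prod_congr rfl fun j hjs => by
              rw [Function.update_of_ne (fun he => hj0 (by rw [← he]; exact hjs))]
          rw [h3] at h2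
          calc q ≤ c * (a j0 ^ n * ∏ j ∈ s, a j ^ m j) := h2
            _ = c * a j0 ^ n * ∏ j ∈ s, a j ^ m j := by ring
      rw [Finset.prod_insert hj0]
      by_cases hf : (fib j0).Finite
      · calc q ≤ (c * ∏ j ∈ s, w j) * a j0 ^ (fib j0).ncard :=
            hstep _ (fun _ => le_refl _)
          _ = (c * ∏ j ∈ s, w j) * w j0 := by rw [hwfin j0 hf]
          _ = c * (w j0 * ∏ j ∈ s, w j) := by ring
      · have hglbj := hwinf j0 hf
        set C : Set K := {y : K | ∃ n : ℕ, 1 ≤ n ∧ y = a j0 ^ n} with hC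
        have hchain : IsChain (· ≤ ·) C := by
          rintro _ ⟨n, -, rfl⟩ _ ⟨m, -, rfl⟩ -
          rcases le_total n m with hnm | hnm
          · exact Or.inr (aux_pow_anti hord habs _ hnm)
          · exact Or.inl (aux_pow_anti hord habs _ hnm)
        have hne : C.Nonempty := ⟨a j0 ^ 1, 1, le_refl 1, rfl⟩
        have hglb2 := hmulinf (c * ∏ j ∈ s, w j) C hchain hne (w j0) hglbj
        have hqlb : q ∈ lowerBounds ((fun y => (c * ∏ j ∈ s, w j) * y) '' C) := by
          rintro _ ⟨_, ⟨n, hn1, rfl⟩, rfl⟩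
          exact hstep n (fun hf' => absurd hf' hf)
        calc q ≤ (c * ∏ j ∈ s, w j) * w j0 := hglb2.2 hqlb
          _ = c * (w j0 * ∏ j ∈ s, w j) := by ring
  -- conclude
  have h1 : p ≤ ∏ j, w j := by
    have := claim Finset.univ 1 p fun m hm => by
      rw [one_mul]; exact hp.1 (hmemT m hm)
    simpa using this
  have h2 : (∏ j, w j) ≤ p := by
    refine hp.2 ?_
    rintro _ ⟨F, -, rfl⟩
    exact hlb F
  exact le_antisymm h1 h2
end
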